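/- arXiv:1312.4567 — 6 statements merged into one kernel-verified Lean document; each statement's English description precedes it below -/
import Mathlib

section
/- The product 𝔥₅ × ℝ of the 5-dimensional Heisenberg Lie algebra with the 1-dimensional abelian Lie algebra admits no symplectic structure; that is, every 2-cocycle on 𝔥₅ × ℝ is degenerate. -/
/-- The componentwise Lie ring structure on the product of two Lie rings. -/
instance prodLieRing (L M : Type*) [LieRing L] [LieRing M] : LieRing (L × M) where
  bracket x y := (⁅x.1, y.1⁆, ⁅x.2, y.2⁆)
  add_lie x y z := by
    show (⁅x.1 + y.1, z.1⁆, ⁅x.2 + y.2, z.2⁆) = _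
    simp [add_lie, Prod.ext_iff]
  lie_add x y z := by
    show (⁅x.1, y.1 + z.1⁆, ⁅x.2, y.2 + z.2⁆) = _
    simp [lie_add, Prod.ext_iff]
  lie_self x := by
    show (⁅x.1, x.1⁆, ⁅x.2, x.2⁆) = (0, 0)
    simp
  leibniz_lie x y z := by
    show (⁅x.1, ⁅y.1, z.1⁆⁆, ⁅x.2, ⁅y.2, z.2⁆⁆) = _
    simp only [Prod.ext_iff]
    constructor <;> exact leibniz_lie _ _ _

/-- The componentwise Lie algebra structure on the product of two Lie algebras. -/
instance prodLieAlgebra (R L M : Type*) [CommRing R] [LieRing L] [LieRing M]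
    [LieAlgebra R L] [LieAlgebra R M] : LieAlgebra R (L × M) :=
  { (inferInstance : Module R (L × M)) with
    lie_smul := fun t x y => by
      show (⁅x.1, (t • y).1⁆, ⁅x.2, (t • y).2⁆) = t • (⁅x.1, y.1⁆, ⁅x.2, y.2⁆)
      simp [Prod.smul_def, Prod.ext_iff] }

/-- A 2-cocycle on a real Lie algebra `L`: an alternating (hence skew-symmetric) bilinear
form `ω` such that `ω ⁅x,y⁆ z + ω ⁅y,z⁆ x + ω ⁅z,x⁆ y = 0` for all `x y z`. -/
def IsCocycle {L : Type*} [LieRing L] [LieAlgebra ℝ L]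
    (ω : L →ₗ[ℝ] L →ₗ[ℝ] ℝ) : Prop :=
  (∀ x, ω x x = 0) ∧ ∀ x y z, ω ⁅x, y⁆ z + ω ⁅y, z⁆ x + ω ⁅z, x⁆ y = 0

/-- A symplectic structure on a real Lie algebra: a nondegenerate 2-cocycle. -/
def IsSymplecticForm {L : Type*} [LieRing L] [LieAlgebra ℝ L]
    (ω : L →ₗ[ℝ] L →ₗ[ℝ] ℝ) : Prop :=
  IsCocycle ω ∧ ∀ x, (∀ y, ω x y = 0) → x = 0

/-- `b` is a basis of `L` exhibiting it as the 5-dimensional Heisenberg Lie algebra 𝔥₅: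
writing `X k = b (k-1)`, the only nonzero brackets are
`⁅X₂,X₃⁆ = X₁ = -⁅X₃,X₂⁆` and `⁅X₄,X₅⁆ = X₁ = -⁅X₅,X₄⁆`. -/
def IsH5Basis {L : Type*} [LieRing L] [LieAlgebra ℝ L] (b : Module.Basis (Fin 5) ℝ L) : Prop :=
  ∀ i j : Fin 5,
    ⁅b i, b j⁆ =
      if (i = 1 ∧ j = 2) ∨ (i = 3 ∧ j = 4) then b 0
      else if (i = 2 ∧ j = 1) ∨ (i = 4 ∧ j = 3) then -(b 0)
      else 0

attribute [local instance 100] LieRing.ofAssociativeRing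

/-! The central element `X₁ = ⁅X₂, X₃⁆ = ⁅X₄, X₅⁆` lies in the radical of every 2-cocycle `ω`
on `𝔥₅ × ℝ`. Indeed, the cocycle identity gives `ω ⁅x, y⁆ z = 0` whenever `z` commutes with both
`x` and `y`, and every basis vector of `𝔥₅ × ℝ` commutes with `X₂` and `X₃` or with `X₄` and `X₅`. -/

theorem IsCocycle.apply_lie_eq_zero {L : Type*} [LieRing L] [LieAlgebra ℝ L]
    {ω : L →ₗ[ℝ] L →ₗ[ℝ] ℝ} (hω : IsCocycle ω) {x y z : L}
    (hyz : ⁅y, z⁆ = 0) (hzx : ⁅z, x⁆ = 0) : ω ⁅x, y⁆ z = 0 := by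
  simpa [hyz, hzx] using hω.2 x y z

namespace IsH5Basis

variable {L : Type*} [LieRing L] [LieAlgebra ℝ L] {b : Module.Basis (Fin 5) ℝ L}

theorem exists_lie_eq_basis_zero_of_commute (hb : IsH5Basis b) (j : Fin 5) :
    ∃ p q : Fin 5, ⁅b p, b q⁆ = b 0 ∧ ⁅b q, b j⁆ = 0 ∧ ⁅b j, b p⁆ = 0 := by
  unfold IsH5Basis at hb
  fin_cases j
  exacts [⟨1, 2, by simp [hb]⟩, ⟨3, 4, by simp [hb]⟩, ⟨3, 4, by simp [hb]⟩,
    ⟨1, 2, by simp [hb]⟩, ⟨1, 2, by simp [hb]⟩]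

theorem cocycle_apply_basis_zero_eq_zero (hb : IsH5Basis b) {M : Type*} [LieRing M]
    [LieAlgebra ℝ M] {ω : (L × M) →ₗ[ℝ] (L × M) →ₗ[ℝ] ℝ} (hω : IsCocycle ω) :
    ω (b 0, 0) = 0 := by
  apply LinearMap.prod_ext
  · refine b.ext fun j => ?_
    obtain ⟨p, q, hpq, hqj, hjp⟩ := hb.exists_lie_eq_basis_zero_of_commute j
    have := hω.apply_lie_eq_zero (x := (b p, 0)) (y := (b q, 0)) (z := (b j, 0))
      (by simp [hqj]) (by simp [hjp])
    simpa [hpq] using this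
  · ext m
    obtain ⟨p, q, hpq, -, -⟩ := hb.exists_lie_eq_basis_zero_of_commute 0
    have := hω.apply_lie_eq_zero (x := (b p, 0)) (y := (b q, 0)) (z := (0, m))
      (by simp) (by simp)
    simpa [hpq] using this

end IsH5Basis

/-- The product `𝔥₅ × ℝ` of the 5-dimensional Heisenberg Lie algebra with the
1-dimensional abelian Lie algebra admits no symplectic structure; that is, every
2-cocycle on `𝔥₅ × ℝ` is degenerate. -/
theorem heisenberg5_prod_real_no_symplectic
    {L : Type*} [LieRing L] [LieAlgebra ℝ L]
    (b : Module.Basis (Fin 5) ℝ L) (hb : IsH5Basis b) :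
    (¬ ∃ ω : (L × ℝ) →ₗ[ℝ] (L × ℝ) →ₗ[ℝ] ℝ, IsSymplecticForm ω) ∧
      ∀ ω : (L × ℝ) →ₗ[ℝ] (L × ℝ) →ₗ[ℝ] ℝ, IsCocycle ω →
        ∃ x : L × ℝ, x ≠ 0 ∧ ∀ y, ω x y = 0 := by
  have degenerate : ∀ ω : (L × ℝ) →ₗ[ℝ] (L × ℝ) →ₗ[ℝ] ℝ, IsCocycle ω →
      ∃ x : L × ℝ, x ≠ 0 ∧ ∀ y, ω x y = 0 := fun ω hω =>
    ⟨(b 0, 0), by simp [b.ne_zero], fun y =>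
      LinearMap.congr_fun (hb.cocycle_apply_basis_zero_eq_zero hω) y⟩
  refine ⟨?_, degenerate⟩
  rintro ⟨ω, hω, hnondeg⟩
  obtain ⟨x, hx, hxω⟩ := degenerate ω hω
  exact hx (hnondeg x hxω)
end

section
/- Let 𝔤 be the 7-dimensional nilpotent real Lie algebra (13457C) with basis X₁, …, X₇ and nonzero brackets [X₁,X₂]=X₃, [X₁,X₃]=X₄, [X₁,X₄]=X₅, [X₁,X₆]=X₇, [X₂,X₅]=X₇, [X₃,X₄]=−X₇ (and those forced by antisymmetry). Then the product 𝔤 × ℝ with the 1-dimensional abelian Lie algebra admits no symplectic structure. -/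
/-- `b` is a basis of `L` exhibiting it as the 7-dimensional nilpotent Lie algebra (13457C)
from Gong's classification: writing `X k = b (k-1)`, the only nonzero brackets are
`⁅X₁,X₂⁆ = X₃`, `⁅X₁,X₃⁆ = X₄`, `⁅X₁,X₄⁆ = X₅`, `⁅X₁,X₆⁆ = X₇`, `⁅X₂,X₅⁆ = X₇`,
`⁅X₃,X₄⁆ = -X₇`, together with those forced by antisymmetry. -/
def Is13457CBasis {L : Type*} [LieRing L] [LieAlgebra ℝ L] (b : Module.Basis (Fin 7) ℝ L) : Prop :=
  ∀ i j : Fin 7,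
    ⁅b i, b j⁆ =
      if i = 0 ∧ j = 1 then b 2 else if i = 1 ∧ j = 0 then -(b 2)
      else if i = 0 ∧ j = 2 then b 3 else if i = 2 ∧ j = 0 then -(b 3)
      else if i = 0 ∧ j = 3 then b 4 else if i = 3 ∧ j = 0 then -(b 4)
      else if i = 0 ∧ j = 5 then b 6 else if i = 5 ∧ j = 0 then -(b 6)
      else if i = 1 ∧ j = 4 then b 6 else if i = 4 ∧ j = 1 then -(b 6)
      else if i = 2 ∧ j = 3 then -(b 6) else if i = 3 ∧ j = 2 then b 6
      else 0

attribute [local instance 100] LieRing.ofAssociativeRing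

@[simp]
theorem Prod.lie_mk {L M : Type*} [LieRing L] [LieRing M] (x y : L) (a c : M) :
    ⁅((x, a) : L × M), (y, c)⁆ = (⁅x, y⁆, ⁅a, c⁆) :=
  rfl

namespace IsCocycle

variable {L : Type*} [LieRing L] [LieAlgebra ℝ L] {ω : L →ₗ[ℝ] L →ₗ[ℝ] ℝ}

theorem apply_lie_eq_zero_s6 (hω : IsCocycle ω) {x y z : L} (hyz : ⁅y, z⁆ = 0) (hzx : ⁅z, x⁆ = 0) :
    ω ⁅x, y⁆ z = 0 := by
  simpa [hyz, hzx] using hω.2 x y z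

theorem apply_lie_eq_zero' (hω : IsCocycle ω) {x y z : L} (hyz : ⁅y, z⁆ = 0) (hzx : ⁅z, x⁆ = 0) :
    ω z ⁅x, y⁆ = 0 :=
  (LinearMap.IsAlt.eq_iff hω.1).mp (hω.apply_lie_eq_zero_s6 hyz hzx)

variable {M : Type*} [LieRing M] [LieAlgebra ℝ M]

theorem compl₁₂_inl {ω : (L × M) →ₗ[ℝ] (L × M) →ₗ[ℝ] ℝ} (hω : IsCocycle ω) :
    IsCocycle (ω.compl₁₂ (LinearMap.inl ℝ L M) (LinearMap.inl ℝ L M)) :=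
  ⟨fun x => hω.1 (x, 0), fun x y z => by simpa using hω.2 (x, 0) (y, 0) (z, 0)⟩

end IsCocycle

namespace Is13457CBasis

variable {L : Type*} [LieRing L] [LieAlgebra ℝ L] {b : Module.Basis (Fin 7) ℝ L}

theorem cocycle_apply_six_eq_zero (hb : Is13457CBasis b) {ω : L →ₗ[ℝ] L →ₗ[ℝ] ℝ}
    (hω : IsCocycle ω) (z : L) : ω (b 6) z = 0 := by
  suffices hbasis : ∀ j, ω (b 6) (b j) = 0 from
    LinearMap.congr_fun (b.ext (f₂ := 0) fun j => hbasis j) z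
  intro j
  fin_cases j
  · show ω (b 6) (b 0) = 0
    have c₁ : ω (b 2) (b 4) + ω (b 6) (b 0) = 0 := by
      simpa [hb _ _] using hω.2 (b 0) (b 1) (b 4)
    have c₂ : ω (b 6) (b 0) = -ω (b 4) (b 2) := by
      simpa [hb _ _, hω.1, neg_add_eq_zero] using hω.2 (b 0) (b 2) (b 3)
    linarith [LinearMap.IsAlt.neg hω.1 (b 2) (b 4)]
  · show ω (b 6) (b 1) = 0
    rw [show b 6 = ⁅b 3, b 2⁆ by simp [hb _ _]]
    exact hω.apply_lie_eq_zero_s6 (by simp [hb _ _]) (by simp [hb _ _])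
  · show ω (b 6) (b 2) = 0
    rw [show b 2 = ⁅b 0, b 1⁆ by simp [hb _ _]]
    exact hω.apply_lie_eq_zero' (by simp [hb _ _]) (by simp [hb _ _])
  · show ω (b 6) (b 3) = 0
    rw [show b 3 = ⁅b 0, b 2⁆ by simp [hb _ _]]
    exact hω.apply_lie_eq_zero' (by simp [hb _ _]) (by simp [hb _ _])
  · show ω (b 6) (b 4) = 0
    rw [show b 4 = ⁅b 0, b 3⁆ by simp [hb _ _]]
    exact hω.apply_lie_eq_zero' (by simp [hb _ _]) (by simp [hb _ _])
  · show ω (b 6) (b 5) = 0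
    rw [show b 6 = ⁅b 1, b 4⁆ by simp [hb _ _]]
    exact hω.apply_lie_eq_zero_s6 (by simp [hb _ _]) (by simp [hb _ _])
  · exact hω.1 (b 6)

theorem cocycle_prod_apply_eq_zero {M : Type*} [LieRing M] [LieAlgebra ℝ M]
    (hb : Is13457CBasis b) {ω : (L × M) →ₗ[ℝ] (L × M) →ₗ[ℝ] ℝ} (hω : IsCocycle ω)
    (y : L × M) : ω (b 6, 0) y = 0 := by
  have hL : ∀ x : L, ω (b 6, 0) (x, 0) = 0 := hb.cocycle_apply_six_eq_zero hω.compl₁₂_inl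
  have hM : ∀ m : M, ω (b 6, 0) (0, m) = 0 := fun m => by
    rw [show ((b 6, 0) : L × M) = ⁅((b 1, 0) : L × M), (b 4, 0)⁆ by simp [hb _ _]]
    exact hω.apply_lie_eq_zero_s6 (by simp) (by simp)
  obtain ⟨x, m⟩ := y
  rw [show ((x, m) : L × M) = (x, 0) + (0, m) by simp, map_add, hL, hM, add_zero]

end Is13457CBasis

/-- The product of the 7-dimensional nilpotent Lie algebra (13457C) with the
1-dimensional abelian Lie algebra `ℝ` admits no symplectic structure. -/
theorem lie13457C_prod_real_no_symplectic
    {L : Type*} [LieRing L] [LieAlgebra ℝ L]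
    (b : Module.Basis (Fin 7) ℝ L) (hb : Is13457CBasis b) :
    ¬ ∃ Ω : (L × ℝ) →ₗ[ℝ] (L × ℝ) →ₗ[ℝ] ℝ, IsSymplecticForm Ω := by
  rintro ⟨Ω, hΩ⟩
  exact b.ne_zero 6 (congrArg Prod.fst (hΩ.2 _ (hb.cocycle_prod_apply_eq_zero hΩ.1)))
end

section
/- Let 𝔤 and 𝔥 be finite-dimensional real Lie algebras. Let ω_𝔤 be a 2-cocycle on 𝔤 and α : 𝔤 → ℝ a linear functional vanishing on [𝔤,𝔤], such that the radical {x ∈ 𝔤 : ω_𝔤(x,·) = 0} of ω_𝔤 is one-dimensional, spanned by an element z with α(z) ≠ 0; let ω_𝔥, β : 𝔥 → ℝ, and w ∈ 𝔥 satisfy the analogous conditions for 𝔥. Then the bilinear form Ω on 𝔤 × 𝔥 defined by Ω((x,y),(x',y')) = ω_𝔤(x,x') + ω_𝔥(y,y') + α(x)β(y') − α(x')β(y) is a symplectic structure on the product Lie algebra 𝔤 × 𝔥. -/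
/-!
The cocycle identity for `Ω` holds term by term: the mixed term contributes nothing since
`α` and `β` kill brackets. If `(x, y)` lies in the radical of `Ω`, pairing it with `(z, 0)`
and `(0, w)` forces `β y = 0` and `α x = 0`, because `z` and `w` lie in the radicals of `ωL`
and `ωM`. Then `x` and `y` lie in these radicals, i.e. on the lines through `z` and `w`, on
which `α` and `β` vanish only at `0`.
-/

section LineRadical

variable {K V : Type*} [Field K] [AddCommGroup V] [Module K V]
  {ω : V →ₗ[K] V →ₗ[K] K} {α : V →ₗ[K] K} {z : V}

theorem eq_zero_of_forall_apply_eq_mul (hω : ω.IsAlt) (hαz : α z ≠ 0)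
    (hrad : {x : V | ∀ y, ω x y = 0} = (Submodule.span K {z} : Submodule K V))
    {x : V} {c : K} (h : ∀ y, ω x y = c * α y) : c = 0 := by
  have hz : z ∈ {x : V | ∀ y, ω x y = 0} := hrad ▸ Submodule.mem_span_singleton_self z
  have hcz : c * α z = 0 := by rw [← h z, hω.isRefl z x (hz x)]
  exact (mul_eq_zero.mp hcz).resolve_right hαz

theorem eq_zero_of_forall_apply_eq_zero (hαz : α z ≠ 0)
    (hrad : {x : V | ∀ y, ω x y = 0} = (Submodule.span K {z} : Submodule K V))
    {x : V} (hx : ∀ y, ω x y = 0) (hαx : α x = 0) : x = 0 := by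
  obtain ⟨c, rfl⟩ := Submodule.mem_span_singleton.mp ((Set.ext_iff.mp hrad x).mp hx)
  rw [map_smul, smul_eq_mul] at hαx
  rw [(mul_eq_zero.mp hαx).resolve_right hαz, zero_smul]

end LineRadical

theorem isCocycle_of_prod_apply {L M : Type*} [LieRing L] [LieAlgebra ℝ L]
    [LieRing M] [LieAlgebra ℝ M]
    {ωL : L →ₗ[ℝ] L →ₗ[ℝ] ℝ} (hωL : IsCocycle ωL) {α : L →ₗ[ℝ] ℝ} (hα : ∀ x y : L, α ⁅x, y⁆ = 0)
    {ωM : M →ₗ[ℝ] M →ₗ[ℝ] ℝ} (hωM : IsCocycle ωM) {β : M →ₗ[ℝ] ℝ} (hβ : ∀ x y : M, β ⁅x, y⁆ = 0)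
    {Ω : (L × M) →ₗ[ℝ] (L × M) →ₗ[ℝ] ℝ}
    (hΩ : ∀ (x x' : L) (y y' : M),
      Ω (x, y) (x', y') = ωL x x' + ωM y y' + α x * β y' - α x' * β y) :
    IsCocycle Ω := by
  refine ⟨fun ⟨x, y⟩ => ?_, fun ⟨x, y⟩ ⟨x', y'⟩ ⟨x'', y''⟩ => ?_⟩
  · rw [hΩ, hωL.1, hωM.1]
    ring
  · change Ω (⁅x, x'⁆, ⁅y, y'⁆) _ + Ω (⁅x', x''⁆, ⁅y', y''⁆) _ + Ω (⁅x'', x⁆, ⁅y'', y⁆) _ = 0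
    simp only [hΩ, hα, hβ, zero_mul, mul_zero, sub_zero, add_zero]
    linear_combination hωL.2 x x' x'' + hωM.2 y y' y''

theorem symplectic_on_prod_of_cocycles_with_line_radical_general
    {L M : Type*} [LieRing L] [LieAlgebra ℝ L]
    [LieRing M] [LieAlgebra ℝ M]
    (ωL : L →ₗ[ℝ] L →ₗ[ℝ] ℝ) (hωL : IsCocycle ωL)
    (α : L →ₗ[ℝ] ℝ) (hα : ∀ x y : L, α ⁅x, y⁆ = 0)
    (z : L) (hαz : α z ≠ 0)
    (hradL : {x : L | ∀ y, ωL x y = 0} = (Submodule.span ℝ {z} : Submodule ℝ L))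
    (ωM : M →ₗ[ℝ] M →ₗ[ℝ] ℝ) (hωM : IsCocycle ωM)
    (β : M →ₗ[ℝ] ℝ) (hβ : ∀ x y : M, β ⁅x, y⁆ = 0)
    (w : M) (hβw : β w ≠ 0)
    (hradM : {x : M | ∀ y, ωM x y = 0} = (Submodule.span ℝ {w} : Submodule ℝ M))
    (Ω : (L × M) →ₗ[ℝ] (L × M) →ₗ[ℝ] ℝ)
    (hΩ : ∀ (x x' : L) (y y' : M),
      Ω (x, y) (x', y') = ωL x x' + ωM y y' + α x * β y' - α x' * β y) :
    IsSymplecticForm Ω := by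
  refine ⟨isCocycle_of_prod_apply hωL hα hωM hβ hΩ, ?_⟩
  rintro ⟨x, y⟩ hxy
  have hx : ∀ x', ωL x x' = β y * α x' := fun x' => by
    have := hxy (x', 0)
    simp only [hΩ, map_zero, mul_zero] at this
    linarith
  have hy : ∀ y', ωM y y' = -α x * β y' := fun y' => by
    have := hxy (0, y')
    simp only [hΩ, map_zero, zero_mul] at this
    linarith
  have hβy : β y = 0 := eq_zero_of_forall_apply_eq_mul hωL.1 hαz hradL hx
  have hαx : α x = 0 := neg_eq_zero.mp (eq_zero_of_forall_apply_eq_mul hωM.1 hβw hradM hy)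
  refine Prod.ext (eq_zero_of_forall_apply_eq_zero hαz hradL (fun x' => ?_) hαx)
    (eq_zero_of_forall_apply_eq_zero hβw hradM (fun y' => ?_) hβy)
  · rw [hx, hβy, zero_mul]
  · rw [hy, hαx, neg_zero, zero_mul]

/-- If `ωL` is a 2-cocycle on `L` whose radical is one-dimensional, spanned by `z`, and
`α` is a linear functional vanishing on `⁅L, L⁆` with `α z ≠ 0` (and similarly
`ωM`, `β`, `w` for `M`), then
`Ω ((x,y), (x',y')) = ωL x x' + ωM y y' + α x * β y' - α x' * β y`
is a symplectic structure on the product Lie algebra `L × M`. -/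
theorem symplectic_on_prod_of_cocycles_with_line_radical
    {L M : Type*} [LieRing L] [LieAlgebra ℝ L] [FiniteDimensional ℝ L]
    [LieRing M] [LieAlgebra ℝ M] [FiniteDimensional ℝ M]
    (ωL : L →ₗ[ℝ] L →ₗ[ℝ] ℝ) (hωL : IsCocycle ωL)
    (α : L →ₗ[ℝ] ℝ) (hα : ∀ x y : L, α ⁅x, y⁆ = 0)
    (z : L) (hαz : α z ≠ 0)
    (hradL : {x : L | ∀ y, ωL x y = 0} = (Submodule.span ℝ {z} : Submodule ℝ L))
    (ωM : M →ₗ[ℝ] M →ₗ[ℝ] ℝ) (hωM : IsCocycle ωM)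
    (β : M →ₗ[ℝ] ℝ) (hβ : ∀ x y : M, β ⁅x, y⁆ = 0)
    (w : M) (hβw : β w ≠ 0)
    (hradM : {x : M | ∀ y, ωM x y = 0} = (Submodule.span ℝ {w} : Submodule ℝ M))
    (Ω : (L × M) →ₗ[ℝ] (L × M) →ₗ[ℝ] ℝ)
    (hΩ : ∀ (x x' : L) (y y' : M),
      Ω (x, y) (x', y') = ωL x x' + ωM y y' + α x * β y' - α x' * β y) :
    IsSymplecticForm Ω :=
  symplectic_on_prod_of_cocycles_with_line_radical_general ωL hωL α hα z hαz hradL ωM hωM β hβ w hβw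
    hradM Ω hΩ
end

section
/- Let 𝔤 and 𝔥 be finite-dimensional real Lie algebras of odd dimension. If both product Lie algebras 𝔤 × ℝ and 𝔥 × ℝ admit symplectic structures, then the product Lie algebra 𝔤 × 𝔥 admits a symplectic structure. -/
attribute [instance 100] LieRing.ofAssociativeRing

open LinearMap

section LinearAlgebra

variable {K V W : Type*} [Field K] [AddCommGroup V] [Module K V] [AddCommGroup W] [Module K W]

/-- Left-separation of the form `((x, c), (y, t)) ↦ ω x y + t * α x - c * α y` on `V × K`,
written in terms of `ω` and `α`. -/
def SeparatingLeftWith (ω : V →ₗ[K] V →ₗ[K] K) (α : V →ₗ[K] K) : Prop :=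
  ∀ x (c : K), ω x = c • α → α x = 0 → x = 0 ∧ c = 0

def wedgeForm (a b : V →ₗ[K] K) : V →ₗ[K] V →ₗ[K] K :=
  a.smulRight b - b.smulRight a

@[simp]
theorem wedgeForm_apply (a b : V →ₗ[K] K) (x y : V) :
    wedgeForm a b x y = a x * b y - b x * a y := by
  simp [wedgeForm, smulRight_apply]

def prodForm (ω : V →ₗ[K] V →ₗ[K] K) (σ : W →ₗ[K] W →ₗ[K] K) (α : V →ₗ[K] K) (β : W →ₗ[K] K)
    (r : K) : (V × W) →ₗ[K] (V × W) →ₗ[K] K :=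
  ω.compl₁₂ (fst K V W) (fst K V W) + σ.compl₁₂ (snd K V W) (snd K V W) +
    r • wedgeForm (α ∘ₗ fst K V W) (β ∘ₗ snd K V W)

@[simp]
theorem prodForm_apply (ω : V →ₗ[K] V →ₗ[K] K) (σ : W →ₗ[K] W →ₗ[K] K) (α : V →ₗ[K] K)
    (β : W →ₗ[K] K) (r : K) (p q : V × W) :
    prodForm ω σ α β r p q = ω p.1 q.1 + σ p.2 q.2 + r * (α p.1 * β q.2 - β p.2 * α q.1) := by
  simp [prodForm]

theorem LinearMap.IsAlt.apply_prod_eq {ω₁ : (V × K) →ₗ[K] (V × K) →ₗ[K] K} (h : ω₁.IsAlt) (x y : V)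
    (c t : K) :
    ω₁ (x, c) (y, t) = ω₁ (x, 0) (y, 0) + t * ω₁ (x, 0) (0, 1) - c * ω₁ (y, 0) (0, 1) := by
  have hsplit : ∀ (z : V) (a : K), ((z, a) : V × K) = (z, 0) + a • (0, 1) := fun z a => by simp
  rw [hsplit x c, hsplit y t]
  simp only [map_add, map_smul, LinearMap.add_apply, LinearMap.smul_apply, smul_eq_mul,
    h.self_eq_zero, ← h.neg (y, 0) (0, 1)]
  ring

theorem LinearMap.SeparatingLeft.separatingLeftWith {ω₁ : (V × K) →ₗ[K] (V × K) →ₗ[K] K}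
    (hsep : ω₁.SeparatingLeft) (halt : ω₁.IsAlt) :
    SeparatingLeftWith (ω₁.compl₁₂ (inl K V K) (inl K V K)) (ω₁.flip (0, 1) ∘ₗ inl K V K) := by
  intro x c hx hαx
  have hx' : ∀ y, ω₁ (x, 0) (y, 0) = c * ω₁ (y, 0) (0, 1) := by
    simpa using LinearMap.congr_fun hx
  simp only [comp_apply, flip_apply, inl_apply] at hαx
  have hzero : ((x, c) : V × K) = 0 := hsep _ fun ⟨y, t⟩ => by
    rw [halt.apply_prod_eq, hx' y, hαx]
    ring
  simpa using hzero

theorem SeparatingLeftWith.exists_slope [FiniteDimensional K V] {ω : V →ₗ[K] V →ₗ[K] K}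
    {α : V →ₗ[K] K} (h : SeparatingLeftWith ω α) :
    ∃ s : K, ∀ x c, ω x = c • α → c = s * α x := by
  -- `(x, c) ↦ ω x - c • α` maps `V × K` to the dual of `V`, a space of smaller dimension
  have hker : ker (ω ∘ₗ fst K V K - (snd K V K).smulRight α) ≠ ⊥ := by
    refine ker_ne_bot_of_finrank_lt ?_
    rw [Subspace.dual_finrank_eq, Module.finrank_prod, Module.finrank_self]
    exact Nat.lt_succ_self _
  obtain ⟨⟨u, s₀⟩, hmem, hne⟩ := (Submodule.ne_bot_iff _).mp hker
  have hu : ω u = s₀ • α := sub_eq_zero.mp (by simpa using hmem)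
  have hαu : α u ≠ 0 := fun h0 => hne (Prod.ext (h _ _ hu h0).1 (h _ _ hu h0).2)
  refine ⟨s₀ / α u, fun x c hx => ?_⟩
  have hcomb := h (α u • x - α x • u) (α u * c - α x * s₀)
    (by rw [map_sub, map_smul, map_smul, hx, hu]; module)
    (by simp only [map_sub, map_smul, smul_eq_mul]; ring)
  field_simp
  linear_combination hcomb.2

theorem SeparatingLeftWith.separatingLeft_prodForm {ω : V →ₗ[K] V →ₗ[K] K}
    {σ : W →ₗ[K] W →ₗ[K] K} {α : V →ₗ[K] K} {β : W →ₗ[K] K} {s t r : K}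
    (hω : SeparatingLeftWith ω α) (hσ : SeparatingLeftWith σ β)
    (hs : ∀ x c, ω x = c • α → c = s * α x) (ht : ∀ m c, σ m = c • β → c = t * β m)
    (hr : r ^ 2 + s * t ≠ 0) :
    (prodForm ω σ α β r).SeparatingLeft := by
  rintro ⟨x, m⟩ hxm
  have hx : ω x = (r * β m) • α := by
    ext y
    have := hxm (y, 0)
    simp only [prodForm_apply, map_zero, mul_zero, zero_sub] at this
    simp only [LinearMap.smul_apply, smul_eq_mul]
    linear_combination this
  have hm : σ m = (-(r * α x)) • β := by
    ext n
    have := hxm (0, n)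
    simp only [prodForm_apply, map_zero, mul_zero, sub_zero, zero_add] at this
    simp only [LinearMap.smul_apply, smul_eq_mul]
    linear_combination this
  have hsx := hs _ _ hx
  have htm := ht _ _ hm
  have hαx : α x = 0 := by
    have : (r ^ 2 + s * t) * α x = 0 := by linear_combination -t * hsx - r * htm
    exact (mul_eq_zero.mp this).resolve_left hr
  have hβm : β m = 0 := by
    have : (r ^ 2 + s * t) * β m = 0 := by linear_combination r * hsx - s * htm
    exact (mul_eq_zero.mp this).resolve_left hr
  rw [hβm, mul_zero, zero_smul] at hx
  rw [hαx, mul_zero, neg_zero, zero_smul] at hm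
  rw [(hω _ 0 (by simpa using hx) hαx).1, (hσ _ 0 (by simpa using hm) hβm).1, Prod.mk_zero_zero]

theorem SeparatingLeftWith.exists_separatingLeft_prodForm [FiniteDimensional K V]
    [FiniteDimensional K W] {ω : V →ₗ[K] V →ₗ[K] K} {σ : W →ₗ[K] W →ₗ[K] K} {α : V →ₗ[K] K}
    {β : W →ₗ[K] K} (hω : SeparatingLeftWith ω α) (hσ : SeparatingLeftWith σ β) :
    ∃ r, (prodForm ω σ α β r).SeparatingLeft := by
  obtain ⟨s, hs⟩ := hω.exists_slope
  obtain ⟨t, ht⟩ := hσ.exists_slope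
  by_cases hst : s * t = 0
  · exact ⟨1, hω.separatingLeft_prodForm hσ hs ht (by simp [hst])⟩
  · exact ⟨0, hω.separatingLeft_prodForm hσ hs ht (by simpa using hst)⟩

end LinearAlgebra

section LieAlgebra

variable {L L' M : Type*} [LieRing L] [LieAlgebra ℝ L] [LieRing L'] [LieAlgebra ℝ L']
  [LieRing M] [LieAlgebra ℝ M]

theorem IsCocycle.add {ω σ : L →ₗ[ℝ] L →ₗ[ℝ] ℝ} (hω : IsCocycle ω) (hσ : IsCocycle σ) :
    IsCocycle (ω + σ) :=
  ⟨fun x => by simp [hω.1 x, hσ.1 x], fun x y z => by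
    simp only [LinearMap.add_apply]
    linear_combination hω.2 x y z + hσ.2 x y z⟩

theorem IsCocycle.smul {ω : L →ₗ[ℝ] L →ₗ[ℝ] ℝ} (hω : IsCocycle ω) (r : ℝ) : IsCocycle (r • ω) :=
  ⟨fun x => by simp [hω.1 x], fun x y z => by
    simp only [LinearMap.smul_apply, smul_eq_mul]
    linear_combination r * hω.2 x y z⟩

theorem IsCocycle.comp {ω : L →ₗ[ℝ] L →ₗ[ℝ] ℝ} (hω : IsCocycle ω) (f : L' →ₗ⁅ℝ⁆ L) :
    IsCocycle (ω.compl₁₂ (f : L' →ₗ[ℝ] L) f) :=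
  ⟨fun x => hω.1 (f x), fun x y z => by simpa using hω.2 (f x) (f y) (f z)⟩

theorem isCocycle_wedgeForm {a b : L →ₗ[ℝ] ℝ} (ha : ∀ x y : L, a ⁅x, y⁆ = 0)
    (hb : ∀ x y : L, b ⁅x, y⁆ = 0) : IsCocycle (wedgeForm a b) :=
  ⟨fun x => by simp [mul_comm], fun x y z => by simp [ha, hb]⟩

theorem IsCocycle.apply_lie_eq_zero_of_central {ω : L →ₗ[ℝ] L →ₗ[ℝ] ℝ} (hω : IsCocycle ω)
    {z : L} (hz : ∀ y : L, ⁅y, z⁆ = 0) (x y : L) : ω ⁅x, y⁆ z = 0 := by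
  have := hω.2 x y z
  rw [hz, ← lie_skew z x, hz, neg_zero] at this
  simpa using this

theorem IsCocycle.prodForm {ω : L →ₗ[ℝ] L →ₗ[ℝ] ℝ} {σ : M →ₗ[ℝ] M →ₗ[ℝ] ℝ} {α : L →ₗ[ℝ] ℝ}
    {β : M →ₗ[ℝ] ℝ} (hω : IsCocycle ω) (hσ : IsCocycle σ) (hα : ∀ x y : L, α ⁅x, y⁆ = 0)
    (hβ : ∀ x y : M, β ⁅x, y⁆ = 0) (r : ℝ) : IsCocycle (prodForm ω σ α β r) :=
  ((hω.comp (LieHom.fst ℝ L M)).add (hσ.comp (LieHom.snd ℝ L M))).add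
    ((isCocycle_wedgeForm (fun p q => hα p.1 q.1) (fun p q => hβ p.2 q.2)).smul r)

theorem IsSymplecticForm.exists_of_prod_real {ω₁ : (L × ℝ) →ₗ[ℝ] (L × ℝ) →ₗ[ℝ] ℝ}
    (h : IsSymplecticForm ω₁) :
    ∃ (ω : L →ₗ[ℝ] L →ₗ[ℝ] ℝ) (α : L →ₗ[ℝ] ℝ),
      IsCocycle ω ∧ (∀ x y : L, α ⁅x, y⁆ = 0) ∧ SeparatingLeftWith ω α := by
  have hcentral : ∀ p : L × ℝ, ⁅p, ((0, 1) : L × ℝ)⁆ = 0 := fun p => by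
    ext <;> simp [Ring.lie_def]
  refine ⟨_, _, IsCocycle.comp h.1 (LieHom.inl ℝ L ℝ), fun x y => ?_,
    LinearMap.SeparatingLeft.separatingLeftWith h.2 h.1.1⟩
  simpa using IsCocycle.apply_lie_eq_zero_of_central h.1 hcentral (x, 0) (y, 0)

end LieAlgebra

theorem prod_symplectic_of_both_prod_real_symplectic_general
    {L M : Type*} [LieRing L] [LieAlgebra ℝ L] [FiniteDimensional ℝ L]
    [LieRing M] [LieAlgebra ℝ M] [FiniteDimensional ℝ M]
    (h1 : ∃ ω : (L × ℝ) →ₗ[ℝ] (L × ℝ) →ₗ[ℝ] ℝ, IsSymplecticForm ω)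
    (h2 : ∃ ω : (M × ℝ) →ₗ[ℝ] (M × ℝ) →ₗ[ℝ] ℝ, IsSymplecticForm ω) :
    ∃ Ω : (L × M) →ₗ[ℝ] (L × M) →ₗ[ℝ] ℝ, IsSymplecticForm Ω := by
  obtain ⟨ω₁, hω₁⟩ := h1
  obtain ⟨σ₁, hσ₁⟩ := h2
  obtain ⟨ω, α, hω, hα, hωα⟩ := IsSymplecticForm.exists_of_prod_real hω₁
  obtain ⟨σ, β, hσ, hβ, hσβ⟩ := IsSymplecticForm.exists_of_prod_real hσ₁
  obtain ⟨r, hr⟩ := hωα.exists_separatingLeft_prodForm hσβ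
  exact ⟨prodForm ω σ α β r, hω.prodForm hσ hα hβ r, hr⟩

/-- If `L` and `M` are odd-dimensional real Lie algebras such that both `L × ℝ` and
`M × ℝ` admit symplectic structures, then `L × M` admits a symplectic structure. -/
theorem prod_symplectic_of_both_prod_real_symplectic
    {L M : Type*} [LieRing L] [LieAlgebra ℝ L] [FiniteDimensional ℝ L]
    [LieRing M] [LieAlgebra ℝ M] [FiniteDimensional ℝ M]
    (hL : Odd (Module.finrank ℝ L)) (hM : Odd (Module.finrank ℝ M))
    (h1 : ∃ ω : (L × ℝ) →ₗ[ℝ] (L × ℝ) →ₗ[ℝ] ℝ, IsSymplecticForm ω)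
    (h2 : ∃ ω : (M × ℝ) →ₗ[ℝ] (M × ℝ) →ₗ[ℝ] ℝ, IsSymplecticForm ω) :
    ∃ Ω : (L × M) →ₗ[ℝ] (L × M) →ₗ[ℝ] ℝ, IsSymplecticForm Ω :=
  prod_symplectic_of_both_prod_real_symplectic_general h1 h2
end

section
/- Let 𝔤 be a finite-dimensional nilpotent real Lie algebra with dim 𝔤 = 5 or dim 𝔤 = 7. Then the product Lie algebra 𝔤 × ℝ admits a symplectic structure if and only if the product Lie algebra 𝔤 × 𝔤 admits a symplectic structure. -/
attribute [local instance 100] LieRing.ofAssociativeRing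

open Module

section AlternatingForms

variable {𝕜 V : Type*} [Field 𝕜] [AddCommGroup V] [Module 𝕜 V]

def wedge (f g : V →ₗ[𝕜] 𝕜) : V →ₗ[𝕜] V →ₗ[𝕜] 𝕜 := f.smulRight g - g.smulRight f

@[simp] lemma wedge_apply (f g : V →ₗ[𝕜] 𝕜) (x y : V) :
    wedge f g x y = f x * g y - g x * f y := by
  simp [wedge, mul_comm]

lemma LinearMap.IsAlt.exists_ne_zero_of_odd_finrank [CharZero 𝕜] [FiniteDimensional 𝕜 V]
    {β : V →ₗ[𝕜] V →ₗ[𝕜] 𝕜} (hβ : β.IsAlt) (hodd : Odd (finrank 𝕜 V)) :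
    ∃ ξ ≠ 0, β ξ = 0 := by
  by_contra! h
  let b := finBasis 𝕜 V
  set M := LinearMap.BilinForm.toMatrix b β with hM_def
  have hM : M.det ≠ 0 := (LinearMap.BilinForm.nondegenerate_iff_det_ne_zero b).mp
    (.ofSeparatingLeft fun x hx => by_contra fun hx0 => h x hx0 (LinearMap.ext hx))
  have hskew : M.transpose = -M := by
    ext i j
    simp only [hM_def, Matrix.transpose_apply, Matrix.neg_apply,
      LinearMap.BilinForm.toMatrix_apply, hβ.neg]
  have : M.det = -M.det := calc
    M.det = (-M).det := by rw [← hskew, Matrix.det_transpose]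
    _ = -M.det := by rw [Matrix.det_neg, Fintype.card_fin, hodd.neg_one_pow, neg_one_mul]
  exact hM (by linear_combination (1/2 : 𝕜) * this)

section Darboux
variable (ι U : Type*) [Fintype ι] [AddCommGroup U] [Module 𝕜 U]

def stdSymplecticForm : ((ι → 𝕜) × (ι → 𝕜) × U) →ₗ[𝕜] ((ι → 𝕜) × (ι → 𝕜) × U) →ₗ[𝕜] 𝕜 :=
  let p := LinearMap.fst 𝕜 (ι → 𝕜) ((ι → 𝕜) × U)
  let q := (LinearMap.fst 𝕜 (ι → 𝕜) U).comp (LinearMap.snd 𝕜 (ι → 𝕜) ((ι → 𝕜) × U))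
  (dotProductBilin 𝕜 𝕜).compl₁₂ p q - (dotProductBilin 𝕜 𝕜).compl₁₂ q p

variable {ι U}

@[simp] lemma stdSymplecticForm_apply (w w' : (ι → 𝕜) × (ι → 𝕜) × U) :
    stdSymplecticForm ι U w w' = w.1 ⬝ᵥ w'.2.1 - w.2.1 ⬝ᵥ w'.1 := rfl

lemma isAlt_stdSymplecticForm : (stdSymplecticForm (𝕜 := 𝕜) ι U).IsAlt := fun w => by
  simp [dotProduct_comm]

lemma eq_of_stdSymplecticForm_eq_zero [DecidableEq ι] {w : (ι → 𝕜) × (ι → 𝕜) × U}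
    (hw : stdSymplecticForm ι U w = 0) : w = (0, 0, w.2.2) := by
  have h : ∀ w', stdSymplecticForm ι U w w' = 0 := fun w' => by simp [hw]
  ext i
  · simpa using h (0, Pi.single i 1, 0)
  · simpa using h (Pi.single i 1, 0, 0)
  · rfl

end Darboux

lemma exists_isAlt_ker_le_span_singleton [FiniteDimensional 𝕜 V] :
    ∃ ν : V →ₗ[𝕜] V →ₗ[𝕜] 𝕜, ν.IsAlt ∧ ∃ ξ : V, LinearMap.ker ν ≤ 𝕜 ∙ ξ := by
  classical
  obtain ⟨m, r, hr, hdim⟩ : ∃ m r, r ≤ 1 ∧ finrank 𝕜 V = m + m + r :=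
    ⟨finrank 𝕜 V / 2, finrank 𝕜 V % 2, by omega, by omega⟩
  let e : V ≃ₗ[𝕜] (Fin m → 𝕜) × (Fin m → 𝕜) × (Fin r → 𝕜) :=
    LinearEquiv.ofFinrankEq _ _ (by simp [hdim]; omega)
  obtain ⟨u, hu⟩ := finrank_le_one_iff.mp (by simpa using hr : finrank 𝕜 (Fin r → 𝕜) ≤ 1)
  refine ⟨(stdSymplecticForm (Fin m) (Fin r → 𝕜)).compl₁₂ e e,
    fun x => isAlt_stdSymplecticForm _, e.symm (0, 0, u), fun x hx => ?_⟩
  have hex : stdSymplecticForm _ _ (e x) = 0 :=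
    LinearMap.ext fun w => by simpa using LinearMap.congr_fun hx (e.symm w)
  obtain ⟨c, hc⟩ := hu (e x).2.2
  refine Submodule.mem_span_singleton.mpr ⟨c, e.injective ?_⟩
  rw [map_smul, e.apply_symm_apply, eq_of_stdSymplecticForm_eq_zero hex, ← hc]
  simp

lemma Submodule.exists_retraction_of_disjoint {K N : Submodule 𝕜 V} (h : Disjoint K N) :
    ∃ π : V →ₗ[𝕜] K, (∀ u : K, π u = u) ∧ N ≤ LinearMap.ker π := by
  obtain ⟨g, hg⟩ := LinearMap.exists_leftInverse_of_injective (N.mkQ ∘ₗ K.subtype) (by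
    rw [LinearMap.ker_comp, Submodule.ker_mkQ]
    exact Submodule.disjoint_iff_comap_eq_bot.mp h)
  exact ⟨g ∘ₗ N.mkQ, LinearMap.congr_fun hg, fun x hx => by
    simp [(Submodule.Quotient.mk_eq_zero N).mpr hx]⟩

lemma LinearMap.IsAlt.ker_add_compl₁₂_le {A : V →ₗ[𝕜] V →ₗ[𝕜] 𝕜} (hA : A.IsAlt)
    {π : V →ₗ[𝕜] LinearMap.ker A} (hπ : ∀ u : LinearMap.ker A, π u = u)
    (ν : LinearMap.ker A →ₗ[𝕜] LinearMap.ker A →ₗ[𝕜] 𝕜) :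
    LinearMap.ker (A + ν.compl₁₂ π π) ≤ (LinearMap.ker ν).map (LinearMap.ker A).subtype := by
  intro x hx
  have hνx : ν (π x) = 0 := LinearMap.ext fun u => by
    have hAu : A x u = 0 := by rw [← hA.neg, LinearMap.mem_ker.mp u.2]; simp
    simpa [hπ, hAu] using LinearMap.congr_fun hx u
  have hAx : x ∈ LinearMap.ker A := LinearMap.ext fun y => by
    simpa [hνx] using LinearMap.congr_fun hx y
  exact Submodule.mem_map.mpr ⟨⟨x, hAx⟩, hπ ⟨x, hAx⟩ ▸ hνx, rfl⟩

end AlternatingForms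

@[simp] lemma prod_lie {L M : Type*} [LieRing L] [LieRing M] (x y : L × M) :
    ⁅x, y⁆ = (⁅x.1, y.1⁆, ⁅x.2, y.2⁆) := rfl

section Cosymplectic

variable {L M : Type*} [LieRing L] [LieAlgebra ℝ L] [LieRing M] [LieAlgebra ℝ M]

lemma IsCocycle.isAlt {β : L →ₗ[ℝ] L →ₗ[ℝ] ℝ} (h : IsCocycle β) : β.IsAlt := h.1

lemma IsCocycle.add_s10 {β β' : L →ₗ[ℝ] L →ₗ[ℝ] ℝ} (h : IsCocycle β) (h' : IsCocycle β') :
    IsCocycle (β + β') :=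
  ⟨fun x => by simp [h.1 x, h'.1 x], fun x y z => by
    simp only [LinearMap.add_apply]
    linarith [h.2 x y z, h'.2 x y z]⟩

lemma IsCocycle.compl₁₂ {β : M →ₗ[ℝ] M →ₗ[ℝ] ℝ} (h : IsCocycle β) (φ : L →ₗ[ℝ] M)
    (hφ : ∀ x y, φ ⁅x, y⁆ = ⁅φ x, φ y⁆) : IsCocycle (β.compl₁₂ φ φ) :=
  ⟨fun x => h.1 (φ x), fun x y z => by simpa only [LinearMap.compl₁₂_apply, hφ] using h.2 _ _ _⟩

lemma isCocycle_compl₁₂_of_map_lie_eq_zero {W : Type*} [AddCommGroup W] [Module ℝ W]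
    {ν : W →ₗ[ℝ] W →ₗ[ℝ] ℝ} (hν : ν.IsAlt) {π : L →ₗ[ℝ] W} (hπ : ∀ x y : L, π ⁅x, y⁆ = 0) :
    IsCocycle (ν.compl₁₂ π π) :=
  ⟨fun x => hν (π x), fun x y z => by simp [hπ]⟩

lemma isCocycle_wedge {f g : L →ₗ[ℝ] ℝ} (hf : ∀ x y : L, f ⁅x, y⁆ = 0)
    (hg : ∀ x y : L, g ⁅x, y⁆ = 0) :
    IsCocycle (wedge f g) :=
  ⟨fun x => by simp [mul_comm], fun x y z => by simp [hf, hg]⟩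

/-- In dimension `2n + 1`, `disjoint_ker` is the usual condition `α ∧ β ^ n ≠ 0`. -/
structure IsCosymplectic (β : L →ₗ[ℝ] L →ₗ[ℝ] ℝ) (α : L →ₗ[ℝ] ℝ) : Prop where
  isCocycle : IsCocycle β
  map_lie : ∀ x y : L, α ⁅x, y⁆ = 0
  disjoint_ker : Disjoint (LinearMap.ker β) (LinearMap.ker α)

namespace IsCosymplectic

variable {β : L →ₗ[ℝ] L →ₗ[ℝ] ℝ} {α : L →ₗ[ℝ] ℝ}

lemma exists_reeb [FiniteDimensional ℝ L] (h : IsCosymplectic β α) (hodd : Odd (finrank ℝ L)) :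
    ∃ ξ, β ξ = 0 ∧ α ξ ≠ 0 := by
  obtain ⟨ξ, hξ0, hξ⟩ := LinearMap.IsAlt.exists_ne_zero_of_odd_finrank h.isCocycle.isAlt hodd
  exact ⟨ξ, hξ, fun hα => hξ0 (Submodule.disjoint_def.mp h.disjoint_ker ξ hξ hα)⟩

lemma isSymplecticForm_prod_real (h : IsCosymplectic β α) {ξ : L} (hξ : β ξ = 0)
    (hαξ : α ξ ≠ 0) :
    IsSymplecticForm (β.compl₁₂ (LinearMap.fst ℝ L ℝ) (LinearMap.fst ℝ L ℝ) +
      wedge (LinearMap.snd ℝ L ℝ) (α ∘ₗ LinearMap.fst ℝ L ℝ)) := by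
  refine ⟨(h.isCocycle.compl₁₂ _ fun _ _ => rfl).add_s10
    (isCocycle_wedge (fun x y => by simp [Ring.lie_def, mul_comm])
      fun x y => by simp [h.map_lie]), ?_⟩
  rintro ⟨x, s⟩ hx
  simp only [LinearMap.add_apply, LinearMap.compl₁₂_apply, wedge_apply] at hx
  have hαx : α x = 0 := by simpa using hx (0, 1)
  have hβξ : β x ξ = 0 := by rw [← h.isCocycle.isAlt.neg, hξ, LinearMap.zero_apply, neg_zero]
  have hs : s = 0 := by simpa [hβξ, hαξ] using hx (ξ, 0)
  have hβx : β x = 0 := LinearMap.ext fun y => by simpa [hs] using hx (y, 0)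
  simp [Submodule.disjoint_def.mp h.disjoint_ker x hβx hαx, hs]

lemma isSymplecticForm_prod_self (h : IsCosymplectic β α) {ξ : L} (hξ : β ξ = 0)
    (hαξ : α ξ ≠ 0) :
    IsSymplecticForm (β.compl₁₂ (LinearMap.fst ℝ L L) (LinearMap.fst ℝ L L) +
      β.compl₁₂ (LinearMap.snd ℝ L L) (LinearMap.snd ℝ L L) +
      wedge (α ∘ₗ LinearMap.fst ℝ L L) (α ∘ₗ LinearMap.snd ℝ L L)) := by
  refine ⟨((h.isCocycle.compl₁₂ _ fun _ _ => rfl).add_s10 (h.isCocycle.compl₁₂ _ fun _ _ => rfl)).add_s10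
    (isCocycle_wedge (fun x y => by simp [h.map_lie]) fun x y => by simp [h.map_lie]), ?_⟩
  rintro ⟨x₁, x₂⟩ hx
  simp only [LinearMap.add_apply, LinearMap.compl₁₂_apply, wedge_apply] at hx
  have hβξ : ∀ x, β x ξ = 0 := fun x => by
    rw [← h.isCocycle.isAlt.neg, hξ, LinearMap.zero_apply, neg_zero]
  have hα₁ : α x₁ = 0 := by simpa [hβξ, hαξ] using hx (0, ξ)
  have hα₂ : α x₂ = 0 := by simpa [hβξ, hαξ] using hx (ξ, 0)
  have hβ₁ : β x₁ = 0 := LinearMap.ext fun y => by simpa [hα₂] using hx (y, 0)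
  have hβ₂ : β x₂ = 0 := LinearMap.ext fun y => by simpa [hα₁] using hx (0, y)
  simp [Submodule.disjoint_def.mp h.disjoint_ker _ hβ₁ hα₁,
    Submodule.disjoint_def.mp h.disjoint_ker _ hβ₂ hα₂]

end IsCosymplectic

lemma IsCocycle.exists_isCosymplectic [FiniteDimensional ℝ L] (hodd : Odd (finrank ℝ L))
    {W : Type*} [AddCommGroup W] [Module ℝ W] {A : L →ₗ[ℝ] L →ₗ[ℝ] ℝ} (hA : IsCocycle A)
    {B : L →ₗ[ℝ] W →ₗ[ℝ] ℝ} (hB : ∀ x y : L, B ⁅x, y⁆ = 0)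
    (hAB : Disjoint (LinearMap.ker A) (LinearMap.ker B)) :
    ∃ (β : L →ₗ[ℝ] L →ₗ[ℝ] ℝ) (α : L →ₗ[ℝ] ℝ), IsCosymplectic β α := by
  obtain ⟨π, hπ, hπB⟩ := Submodule.exists_retraction_of_disjoint hAB
  obtain ⟨ν, hν, ξ, hνξ⟩ := exists_isAlt_ker_le_span_singleton (𝕜 := ℝ) (V := LinearMap.ker A)
  have hβ : IsCocycle (A + ν.compl₁₂ π π) :=
    hA.add_s10 (isCocycle_compl₁₂_of_map_lie_eq_zero hν fun x y => hπB (hB x y))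
  have hker : LinearMap.ker (A + ν.compl₁₂ π π) ≤ ℝ ∙ (ξ : L) :=
    (hA.isAlt.ker_add_compl₁₂_le hπ ν).trans
      (Submodule.map_subtype_span_singleton ξ ▸ Submodule.map_mono hνξ)
  obtain ⟨η, hη0, hη⟩ := hβ.isAlt.exists_ne_zero_of_odd_finrank hodd
  have hξ : (ξ : L) ≠ 0 := by
    rintro hξ
    obtain ⟨t, rfl⟩ := Submodule.mem_span_singleton.mp (hker hη)
    simp [hξ] at hη0
  obtain ⟨c, hc⟩ : ∃ c, B ξ c ≠ 0 := by
    by_contra! hc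
    exact hξ (Submodule.disjoint_def.mp hAB ξ ξ.2 (LinearMap.ext hc))
  refine ⟨_, B.flip c, hβ, fun x y => by simp [hB], Submodule.disjoint_def.mpr fun x hx hαx => ?_⟩
  obtain ⟨t, rfl⟩ := Submodule.mem_span_singleton.mp (hker hx)
  simp_all

lemma IsSymplecticForm.exists_isCosymplectic_of_prod [FiniteDimensional ℝ L]
    (hodd : Odd (finrank ℝ L)) {Ω : (L × M) →ₗ[ℝ] (L × M) →ₗ[ℝ] ℝ} (hΩ : IsSymplecticForm Ω) :
    ∃ (β : L →ₗ[ℝ] L →ₗ[ℝ] ℝ) (α : L →ₗ[ℝ] ℝ), IsCosymplectic β α := by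
  obtain ⟨⟨halt, hcoc⟩, hnd⟩ := hΩ
  refine IsCocycle.exists_isCosymplectic hodd (W := M)
    (IsCocycle.compl₁₂ ⟨halt, hcoc⟩ (LinearMap.inl ℝ L M) fun x y => by simp)
    (B := Ω.compl₁₂ (LinearMap.inl ℝ L M) (LinearMap.inr ℝ L M)) (fun x y => ?_)
    (Submodule.disjoint_def.mpr fun x hA hB => ?_)
  · ext c
    simpa [Prod.mk_zero_zero] using hcoc (x, 0) (y, 0) (0, c)
  · have hx : ∀ q : L × M, Ω (x, 0) q = 0 := fun ⟨y, c⟩ => by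
      rw [← add_zero y, ← zero_add c, ← Prod.mk_add_mk, map_add]
      simpa using congr($(LinearMap.congr_fun hA y) + $(LinearMap.congr_fun hB c))
    exact congrArg Prod.fst (hnd _ hx)

end Cosymplectic

theorem nilpotent_dim5or7_prod_real_symplectic_iff_square_general
    {L : Type*} [LieRing L] [LieAlgebra ℝ L] [FiniteDimensional ℝ L]
    (hdim : Module.finrank ℝ L = 5 ∨ Module.finrank ℝ L = 7) :
    (∃ ω : (L × ℝ) →ₗ[ℝ] (L × ℝ) →ₗ[ℝ] ℝ, IsSymplecticForm ω) ↔
      ∃ Ω : (L × L) →ₗ[ℝ] (L × L) →ₗ[ℝ] ℝ, IsSymplecticForm Ω := by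
  have hodd : Odd (finrank ℝ L) := by rcases hdim with h | h <;> rw [h] <;> decide
  constructor
  · rintro ⟨ω, hω⟩
    obtain ⟨β, α, h⟩ := hω.exists_isCosymplectic_of_prod hodd
    obtain ⟨ξ, hξ, hαξ⟩ := h.exists_reeb hodd
    exact ⟨_, h.isSymplecticForm_prod_self hξ hαξ⟩
  · rintro ⟨Ω, hΩ⟩
    obtain ⟨β, α, h⟩ := hΩ.exists_isCosymplectic_of_prod hodd
    obtain ⟨ξ, hξ, hαξ⟩ := h.exists_reeb hodd
    exact ⟨_, h.isSymplecticForm_prod_real hξ hαξ⟩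

/-- For a nilpotent real Lie algebra `L` of dimension 5 or 7, the product `L × ℝ` admits a
symplectic structure if and only if `L × L` does. -/
theorem nilpotent_dim5or7_prod_real_symplectic_iff_square
    {L : Type*} [LieRing L] [LieAlgebra ℝ L] [FiniteDimensional ℝ L]
    [LieRing.IsNilpotent L]
    (hdim : Module.finrank ℝ L = 5 ∨ Module.finrank ℝ L = 7) :
    (∃ ω : (L × ℝ) →ₗ[ℝ] (L × ℝ) →ₗ[ℝ] ℝ, IsSymplecticForm ω) ↔
      ∃ Ω : (L × L) →ₗ[ℝ] (L × L) →ₗ[ℝ] ℝ, IsSymplecticForm Ω :=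
  nilpotent_dim5or7_prod_real_symplectic_iff_square_general hdim
end

section
/- Let V be a finite-dimensional real vector space, ω an alternating bilinear form on V, and α : V → ℝ a linear functional. Define the alternating bilinear form Ω on V × ℝ by Ω((x,s),(x',s')) = ω(x,x') + α(x)s' − α(x')s. Then Ω is nondegenerate if and only if the radical {x ∈ V : ω(x,y) = 0 for all y ∈ V} of ω is one-dimensional and α does not vanish identically on it. -/
/-! The radical of `Ω` consists of the pairs `(x, s)` with `α x = 0` and `ω x = s • α`. For
`s ≠ 0` this exhibits `α` as a value of `ω`; for `s = 0` it puts `x` in `ker ω ⊓ ker α`. So `Ω`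
is nondegenerate iff `α ∉ range ω` and `α` is injective on `ker ω`. As `ω` is alternating,
`range ω` is the annihilator of `ker ω`, so the first condition says that `α` does not vanish on
`ker ω`; then `α` maps `ker ω` onto the scalars, injectively exactly when `ker ω` is a line. -/

open Module LinearMap Function

theorem LinearMap.IsAlt.range_eq_dualAnnihilator_ker {K V : Type*} [Field K] [AddCommGroup V]
    [Module K V] [IsReflexive K V] {B : V →ₗ[K] V →ₗ[K] K} (hB : B.IsAlt) :
    range B = (ker B).dualAnnihilator := by
  have hflip : B.flip = -B := by
    ext x y
    exact (hB.neg x y).symm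
  rw [dualAnnihilator_ker_eq_range_flip, hflip, range_neg]

theorem Submodule.finrank_eq_one_iff_injective_domRestrict {K V : Type*} [Field K]
    [AddCommGroup V] [Module K V] {W : Submodule K V} [FiniteDimensional K W] {α : Dual K V}
    (hα : ∃ x ∈ W, α x ≠ 0) :
    finrank K W = 1 ↔ Injective (α.domRestrict W) := by
  obtain ⟨x, hxW, hαx⟩ := hα
  have hsurj : Surjective (α.domRestrict W) := fun c =>
    ⟨(c / α x) • ⟨x, hxW⟩, by simp [hαx]⟩
  constructor
  · intro h
    exact (injective_iff_surjective_of_finrank_eq_finrank (by simp [h])).mpr hsurj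
  · intro hinj
    simpa using (LinearEquiv.ofBijective _ ⟨hinj, hsurj⟩).finrank_eq

section Extension

variable {R V : Type*} [AddCommGroup V]

theorem extension_eq_zero_iff [CommRing R] [Module R V] {ω : V →ₗ[R] V →ₗ[R] R} {α : V →ₗ[R] R}
    {Ω : (V × R) →ₗ[R] (V × R) →ₗ[R] R}
    (hΩ : ∀ (x x' : V) (s s' : R), Ω (x, s) (x', s') = ω x x' + α x * s' - α x' * s)
    (x : V) (s : R) : Ω (x, s) = 0 ↔ α x = 0 ∧ ω x = s • α := by
  constructor
  · intro h
    have hα : α x = 0 := by simpa [hΩ] using LinearMap.congr_fun h (0, 1)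
    refine ⟨hα, LinearMap.ext fun y => ?_⟩
    have := LinearMap.congr_fun h (y, 0)
    simp only [hΩ, hα, LinearMap.zero_apply] at this
    simp only [LinearMap.smul_apply, smul_eq_mul]
    linear_combination this
  · rintro ⟨hα, hω⟩
    exact LinearMap.ext fun ⟨y, t⟩ => by simp [hΩ, hα, hω, mul_comm]

theorem ker_extension_eq_bot_iff [Field R] [Module R V] {ω : V →ₗ[R] V →ₗ[R] R} (hω : ω.IsAlt)
    {α : V →ₗ[R] R} {Ω : (V × R) →ₗ[R] (V × R) →ₗ[R] R}
    (hΩ : ∀ (x x' : V) (s s' : R), Ω (x, s) (x', s') = ω x x' + α x * s' - α x' * s) :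
    ker Ω = ⊥ ↔ α ∉ range ω ∧ Injective (α.domRestrict (ker ω)) := by
  simp only [ker_eq_bot', Prod.forall, extension_eq_zero_iff hΩ, Prod.mk_eq_zero, and_imp]
  constructor
  · intro h
    refine ⟨fun ⟨x, hx⟩ => ?_, ?_⟩
    · exact one_ne_zero (h x 1 (hx ▸ hω x) (by rw [hx, one_smul])).2
    · rw [← ker_eq_bot, ker_eq_bot']
      rintro ⟨x, hx⟩ hαx
      exact Subtype.ext (h x 0 hαx (by rwa [zero_smul])).1
  · rintro ⟨hrange, hinj⟩ x s hαx hωx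
    have hs : s = 0 := by
      by_contra hs
      exact hrange ⟨s⁻¹ • x, by rw [map_smul, hωx, smul_smul, inv_mul_cancel₀ hs, one_smul]⟩
    subst hs
    have hx : x ∈ ker ω := by rw [mem_ker, hωx, zero_smul]
    exact ⟨congrArg Subtype.val (@hinj ⟨x, hx⟩ 0 (by simpa using hαx)), rfl⟩

end Extension

/-- Let `V` be a finite-dimensional real vector space, `ω` an alternating bilinear form on
`V` and `α` a linear functional. The form `Ω ((x,s), (x',s')) = ω x x' + α x * s' - α x' * s`
on `V × ℝ` is nondegenerate if and only if the radical `{x | ∀ y, ω x y = 0} = ker ω` of `ω`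
is one-dimensional and `α` does not vanish identically on it. -/
theorem extension_nondegenerate_iff_radical_line_and_functional_nonzero
    {V : Type*} [AddCommGroup V] [Module ℝ V] [FiniteDimensional ℝ V]
    (ω : V →ₗ[ℝ] V →ₗ[ℝ] ℝ) (hω : ∀ x, ω x x = 0)
    (α : V →ₗ[ℝ] ℝ)
    (Ω : (V × ℝ) →ₗ[ℝ] (V × ℝ) →ₗ[ℝ] ℝ)
    (hΩ : ∀ (x x' : V) (s s' : ℝ), Ω (x, s) (x', s') = ω x x' + α x * s' - α x' * s) :
    (∀ u : V × ℝ, (∀ v : V × ℝ, Ω u v = 0) → u = 0) ↔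
      (Module.finrank ℝ (LinearMap.ker ω) = 1 ∧ ∃ x ∈ LinearMap.ker ω, α x ≠ 0) := by
  have hnondeg : (∀ u : V × ℝ, (∀ v, Ω u v = 0) → u = 0) ↔ ker Ω = ⊥ := by
    simp only [ker_eq_bot', LinearMap.ext_iff, LinearMap.zero_apply]
  have hα : α ∉ range ω ↔ ∃ x ∈ ker ω, α x ≠ 0 := by
    rw [IsAlt.range_eq_dualAnnihilator_ker hω, Submodule.mem_dualAnnihilator]
    push Not
    rfl
  rw [hnondeg, ker_extension_eq_bot_iff hω hΩ, hα, and_comm]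
  exact and_congr_left fun h => (Submodule.finrank_eq_one_iff_injective_domRestrict h).symm
end
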